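/- Let V have basis {v_k : k ∈ ℤ}. For fixed a ∈ ℂ*, the action (t1^m t2^n).v_k = (-1)^{m+n+1} (a q^{-k-m})^n v_{k+m} defines an L-module structure on V. -/
import Mathlib


/-- Bracket of basis elements of the centerless q-analog Virasoro-like algebra. -/
noncomputable def qlBr (q : ℂ) (p r : ℤ × ℤ) : (ℤ × ℤ) →₀ ℂ :=
  if p.1 + r.1 = 0 ∧ p.2 + r.2 = 0 then 0
  else (q ^ (p.2 * r.1) - q ^ (p.1 * r.2)) • Finsupp.single (p.1 + r.1, p.2 + r.2) 1

/-- Action of the basis element `t1^{p.1} t2^{p.2}` on the basis vector `v_k`: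
`(t1^m t2^n).v_k = (-1)^{m+n+1} (a q^{-k-m})^n v_{k+m}`. -/
noncomputable def act (q a : ℂ) (p : ℤ × ℤ) (k : ℤ) : ℤ →₀ ℂ :=
  ((-1 : ℂ) ^ (p.1 + p.2 + 1) * (a * q ^ (-k - p.1)) ^ p.2) • Finsupp.single (k + p.1) (1 : ℂ)

/-- The action extended linearly to all of `V`. -/
noncomputable def actExt (q a : ℂ) (p : ℤ × ℤ) (f : ℤ →₀ ℂ) : ℤ →₀ ℂ :=
  f.sum fun k c => c • act q a p k

/-- The action of a general element of `L`. -/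
noncomputable def actL (q a : ℂ) (x : (ℤ × ℤ) →₀ ℂ) (f : ℤ →₀ ℂ) : ℤ →₀ ℂ :=
  x.sum fun p c => c • actExt q a p f

section Aux

lemma qv_combine {G : Type*} [CommGroup G] (a q : G) (m n x y : ℤ) :
    (a^m * q^x) * (a^n * q^y) = a^(m+n) * q^(x+y) := by
  rw [mul_mul_mul_comm, ← zpow_add, ← zpow_add]

lemma qv_grpA {G : Type*} [CommGroup G] (a q : G) (p1 p2 r1 r2 k : ℤ) :
    q^(p1*r2) * (a*q^(-k-(p1+r1)))^(p2+r2) = (a*q^(-k-r1))^r2 * (a*q^(-(k+r1)-p1))^p2 := by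
  simp only [mul_zpow, ← zpow_mul]
  rw [mul_left_comm, ← zpow_add, qv_combine]
  congr 1 <;> try congr 1 <;> ring

lemma qv_grpB {G : Type*} [CommGroup G] (a q : G) (p1 p2 r1 r2 k : ℤ) :
    q^(p2*r1) * (a*q^(-k-(p1+r1)))^(p2+r2) = (a*q^(-k-p1))^p2 * (a*q^(-(k+p1)-r1))^r2 := by
  simp only [mul_zpow, ← zpow_mul]
  rw [mul_left_comm, ← zpow_add, qv_combine]
  congr 1 <;> try congr 1 <;> ring

lemma qv_keyA (q a : ℂ) (hq0 : q ≠ 0) (ha : a ≠ 0) (p1 p2 r1 r2 k : ℤ) :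
    q^(p1*r2) * (a*q^(-k-(p1+r1)))^(p2+r2) = (a*q^(-k-r1))^r2 * (a*q^(-(k+r1)-p1))^p2 := by
  have h := congrArg Units.val (qv_grpA (Units.mk0 a ha) (Units.mk0 q hq0) p1 p2 r1 r2 k)
  simpa only [Units.val_mul, Units.val_zpow_eq_zpow_val, Units.val_mk0] using h

lemma qv_keyB (q a : ℂ) (hq0 : q ≠ 0) (ha : a ≠ 0) (p1 p2 r1 r2 k : ℤ) :
    q^(p2*r1) * (a*q^(-k-(p1+r1)))^(p2+r2) = (a*q^(-k-p1))^p2 * (a*q^(-(k+p1)-r1))^r2 := by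
  have h := congrArg Units.val (qv_grpB (Units.mk0 a ha) (Units.mk0 q hq0) p1 p2 r1 r2 k)
  simpa only [Units.val_mul, Units.val_zpow_eq_zpow_val, Units.val_mk0] using h

lemma qv_key (q a : ℂ) (hq0 : q ≠ 0) (ha : a ≠ 0) (p1 p2 r1 r2 k : ℤ) :
    ((-1:ℂ)^(r1+r2+1) * (a*q^(-k-r1))^r2) * ((-1:ℂ)^(p1+p2+1) * (a*q^(-(k+r1)-p1))^p2)
      - ((-1:ℂ)^(p1+p2+1) * (a*q^(-k-p1))^p2) * ((-1:ℂ)^(r1+r2+1) * (a*q^(-(k+p1)-r1))^r2)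
    = (q ^ (p2*r1) - q ^ (p1*r2)) *
      ((-1:ℂ)^((p1+r1)+(p2+r2)+1) * (a*q^(-k-(p1+r1)))^(p2+r2)) := by
  have hm : (-1:ℂ) ≠ 0 := by norm_num
  have hE : (-1:ℂ)^((p1+r1)+(p2+r2)+1) = -((-1:ℂ)^(r1+r2+1) * (-1:ℂ)^(p1+p2+1)) := by
    rw [← zpow_add₀ hm,
      show (r1+r2+1)+(p1+p2+1) = ((p1+r1)+(p2+r2)+1) + 1 by ring, zpow_add₀ hm _ 1, zpow_one]
    simp only [zpow_add₀ hm, zpow_one]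
    ring
  have hA := qv_keyA q a hq0 ha p1 p2 r1 r2 k
  have hB := qv_keyB q a hq0 ha p1 p2 r1 r2 k
  linear_combination (-((-1:ℂ)^(r1+r2+1) * (-1:ℂ)^(p1+p2+1))) * hA
    + ((-1:ℂ)^(r1+r2+1) * (-1:ℂ)^(p1+p2+1)) * hB
    - (q^(p2*r1) - q^(p1*r2)) * (a*q^(-k-(p1+r1)))^(p2+r2) * hE

lemma actExt_single (q a : ℂ) (p : ℤ × ℤ) (k : ℤ) :
    actExt q a p (Finsupp.single k 1) = act q a p k := by
  unfold actExt
  rw [Finsupp.sum_single_index (by simp), one_smul]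

lemma actExt_act (q a : ℂ) (p r : ℤ × ℤ) (k : ℤ) :
    actExt q a p (act q a r k) =
      ((-1 : ℂ) ^ (r.1 + r.2 + 1) * (a * q ^ (-k - r.1)) ^ r.2) • act q a p (k + r.1) := by
  rw [show act q a r k = Finsupp.single (k + r.1)
      ((-1 : ℂ) ^ (r.1 + r.2 + 1) * (a * q ^ (-k - r.1)) ^ r.2) by
    rw [act, Finsupp.smul_single, smul_eq_mul, mul_one]]
  unfold actExt
  rw [Finsupp.sum_single_index (by simp)]

lemma actL_qlBr (q a : ℂ) (p r : ℤ × ℤ) (k : ℤ) :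
    actL q a (qlBr q p r) (Finsupp.single k 1) =
      (q ^ (p.2 * r.1) - q ^ (p.1 * r.2)) • act q a (p.1 + r.1, p.2 + r.2) k := by
  unfold actL qlBr
  split_ifs with h
  · obtain ⟨h1, h2⟩ := h
    rw [Finsupp.sum_zero_index]
    have he : p.2 * r.1 = p.1 * r.2 := by
      have hp1 : p.1 = -r.1 := by linarith
      have hp2 : p.2 = -r.2 := by linarith
      rw [hp1, hp2]; ring
    rw [he, sub_self, zero_smul]
  · rw [Finsupp.smul_single, smul_eq_mul, mul_one, Finsupp.sum_single_index (by simp),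
      actExt_single]

end Aux

/-- This action makes `V` an `L`-module: `[x,y].v = x.(y.v) - y.(x.v)` for all
basis elements `x, y` of `L` and all basis vectors `v_k`. -/
theorem act_is_module (q a : ℂ) (hq0 : q ≠ 0) (hq : ∀ n : ℕ, 0 < n → q ^ n ≠ 1)
    (ha : a ≠ 0) (p r : ℤ × ℤ) (hp : p ≠ (0, 0)) (hr : r ≠ (0, 0)) (k : ℤ) :
    actL q a (qlBr q p r) (Finsupp.single k 1) =
      actExt q a p (actExt q a r (Finsupp.single k 1)) -
        actExt q a r (actExt q a p (Finsupp.single k 1)) := by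
  rw [actL_qlBr, actExt_single, actExt_single, actExt_act, actExt_act]
  unfold act
  simp only [smul_smul, Finsupp.smul_single, smul_eq_mul, mul_one]
  rw [show k + r.1 + p.1 = k + (p.1 + r.1, p.2 + r.2).1 by simp; ring,
    show k + p.1 + r.1 = k + (p.1 + r.1, p.2 + r.2).1 by simp; ring,
    ← Finsupp.single_sub]
  congr 1
  simpa using (qv_key q a hq0 ha p.1 p.2 r.1 r.2 k).symm
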